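/- Let d ≥ 1, let μ ∈ ℝ^d, let σ ≥ 1, and let φ : ℝ^d → ℝ be the Gaussian density φ(x) = (2πσ²)^{-d/2} exp(-‖x-μ‖²/(2σ²)). Let Q be a probability measure on ℝ^d and let x̂ ∈ ℝ^d be such that ∫ ‖x - x̂‖ dQ(x) < ∞. Then |∫ φ(x) dQ(x) - φ(x̂)| ≤ (d/(√(2π)·σ)) · e^{-1/(2σ²)} · ∫ ‖x - x̂‖ dQ(x). -/

import Mathlib

/-!
Write `φ x = c * g (‖x - μ‖ / σ)` with `g t = exp (-t² / 2)`. Since `|g' t| = |t| exp (-t² / 2)`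
is maximal at `|t| = 1`, `g` is `exp (-1/2)`-Lipschitz, so `φ` is Lipschitz with constant
`c exp (-1/2) / σ`. For any `L`-Lipschitz `f`, `|E_Q f - f x̂| ≤ E_Q |f - f x̂| ≤ L E_Q ‖x - x̂‖`;
finally `c ≤ (2π)^(-1/2)` and `exp (-1/2) ≤ exp (-1/(2σ²))` because `d ≥ 1` and `σ ≥ 1`.
-/

open MeasureTheory Real

theorem mul_exp_neg_sq_div_two_le (t : ℝ) : t * exp (-t ^ 2 / 2) ≤ exp (-1 / 2) := by
  -- `t ≤ (t² + 1) / 2 ≤ exp ((t² - 1) / 2)`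
  have h : t ≤ exp ((t ^ 2 - 1) / 2) := by
    nlinarith [add_one_le_exp ((t ^ 2 - 1) / 2), sq_nonneg (t - 1)]
  calc t * exp (-t ^ 2 / 2) ≤ exp ((t ^ 2 - 1) / 2) * exp (-t ^ 2 / 2) := by gcongr
    _ = exp (-1 / 2) := by rw [← exp_add]; ring_nf

theorem abs_exp_neg_sq_div_two_sub_le (s t : ℝ) :
    |exp (-s ^ 2 / 2) - exp (-t ^ 2 / 2)| ≤ exp (-1 / 2) * |s - t| := by
  have hderiv (r : ℝ) :
      HasDerivAt (fun r : ℝ => exp (-r ^ 2 / 2)) (-(r * exp (-r ^ 2 / 2))) r := by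
    have h := ((hasDerivAt_pow 2 r).neg.div_const 2).exp
    simp only [Pi.neg_apply] at h
    convert h using 1
    ring
  have hbound (r : ℝ) : ‖-(r * exp (-r ^ 2 / 2))‖ ≤ exp (-1 / 2) := by
    rw [norm_neg, norm_mul, norm_of_nonneg (exp_pos _).le, norm_eq_abs, ← sq_abs r]
    exact mul_exp_neg_sq_div_two_le |r|
  simpa only [norm_eq_abs] using convex_univ.norm_image_sub_le_of_norm_hasDerivWithin_le
    (fun r _ => (hderiv r).hasDerivWithinAt) (fun r _ => hbound r) (Set.mem_univ t)
    (Set.mem_univ s)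

theorem lipschitzWith_gaussian {E : Type*} [SeminormedAddCommGroup E] (μ : E) {c σ : ℝ}
    (hc : 0 ≤ c) (hσ : 0 < σ) :
    LipschitzWith (c * exp (-1 / 2) / σ).toNNReal
      (fun x => c * exp (-‖x - μ‖ ^ 2 / (2 * σ ^ 2))) := by
  refine LipschitzWith.of_dist_le_mul fun x y => ?_
  have hscale (z : E) : -‖z - μ‖ ^ 2 / (2 * σ ^ 2) = -(‖z - μ‖ / σ) ^ 2 / 2 := by
    field_simp
  rw [Real.coe_toNNReal _ (by positivity), Real.dist_eq, dist_eq_norm, hscale, hscale, ← mul_sub,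
    abs_mul, abs_of_nonneg hc]
  calc c * |exp (-(‖x - μ‖ / σ) ^ 2 / 2) - exp (-(‖y - μ‖ / σ) ^ 2 / 2)|
      ≤ c * (exp (-1 / 2) * |‖x - μ‖ / σ - ‖y - μ‖ / σ|) := by
        gcongr; exact abs_exp_neg_sq_div_two_sub_le _ _
    _ = c * exp (-1 / 2) / σ * |‖x - μ‖ - ‖y - μ‖| := by
        rw [← sub_div, abs_div, abs_of_pos hσ]; ring
    _ ≤ c * exp (-1 / 2) / σ * ‖x - y‖ := by
        gcongr
        simpa using abs_norm_sub_norm_le (x - μ) (y - μ)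

theorem LipschitzWith.abs_integral_sub_le {X : Type*} [PseudoMetricSpace X] [MeasurableSpace X]
    [OpensMeasurableSpace X] {K : NNReal} {f : X → ℝ} (hf : LipschitzWith K f) (Q : Measure X)
    [IsProbabilityMeasure Q] (x₀ : X) (hmom : Integrable (fun x => dist x x₀) Q) :
    |∫ x, f x ∂Q - f x₀| ≤ K * ∫ x, dist x x₀ ∂Q := by
  have hdist (x : X) : |f x - f x₀| ≤ K * dist x x₀ := by
    simpa only [Real.dist_eq] using hf.dist_le_mul x x₀
  have hint : Integrable f Q := by
    refine ((integrable_const |f x₀|).add (hmom.const_mul K)).mono'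
      hf.continuous.aestronglyMeasurable (ae_of_all _ fun x => ?_)
    show |f x| ≤ |f x₀| + K * dist x x₀
    linarith [abs_sub_abs_le_abs_sub (f x) (f x₀), hdist x]
  calc |∫ x, f x ∂Q - f x₀| = |∫ x, (f x - f x₀) ∂Q| := by
        rw [integral_sub hint (integrable_const _), integral_const, probReal_univ, one_smul]
    _ ≤ ∫ x, |f x - f x₀| ∂Q := abs_integral_le_integral_abs
    _ ≤ ∫ x, K * dist x x₀ ∂Q :=
        integral_mono (hint.sub (integrable_const _)).abs (hmom.const_mul K) hdist
    _ = K * ∫ x, dist x x₀ ∂Q := integral_const_mul _ _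

theorem gaussian_normalizer_le_inv_sqrt_two_pi {d : ℕ} (hd : 1 ≤ d) {σ : ℝ} (hσ : 1 ≤ σ) :
    (2 * π * σ ^ 2) ^ (-(d : ℝ) / 2) ≤ (√(2 * π))⁻¹ := by
  have hbase : 2 * π ≤ 2 * π * σ ^ 2 := le_mul_of_one_le_right (by positivity) (one_le_pow₀ hσ)
  have hd' : (1 : ℝ) ≤ d := by exact_mod_cast hd
  calc (2 * π * σ ^ 2) ^ (-(d : ℝ) / 2) ≤ (2 * π * σ ^ 2) ^ (-(1 : ℝ) / 2) :=
        rpow_le_rpow_of_exponent_le (by nlinarith [pi_gt_three]) (by linarith)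
    _ ≤ (2 * π) ^ (-(1 : ℝ) / 2) := rpow_le_rpow_of_nonpos (by positivity) hbase (by norm_num)
    _ = (√(2 * π))⁻¹ := by rw [neg_div, rpow_neg (by positivity), sqrt_eq_rpow, one_div]

/-- Theorem 3.1 of the paper (quantitative form): for the Gaussian density φ with mean μ
and covariance σ²I (σ ≥ 1), and Q a probability measure with finite first moment around xhat,
the expectation of φ under Q differs from φ(xhat) by at most
(d/(√(2π)σ)) e^{-1/(2σ²)} times the first moment. -/
theorem gaussian_expectation_close_to_point_value
    (d : ℕ) (hd : 1 ≤ d) (μ : EuclideanSpace ℝ (Fin d)) (σ : ℝ) (hσ : 1 ≤ σ)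
    (φ : EuclideanSpace ℝ (Fin d) → ℝ)
    (hφ : ∀ x, φ x = (2 * Real.pi * σ ^ 2) ^ (-(d : ℝ) / 2) *
      Real.exp (-‖x - μ‖ ^ 2 / (2 * σ ^ 2)))
    (Q : Measure (EuclideanSpace ℝ (Fin d))) [IsProbabilityMeasure Q]
    (xhat : EuclideanSpace ℝ (Fin d))
    (hmom : Integrable (fun x => ‖x - xhat‖) Q) :
    |(∫ x, φ x ∂Q) - φ xhat| ≤
      (d / (Real.sqrt (2 * Real.pi) * σ)) * Real.exp (-1 / (2 * σ ^ 2)) *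
        ∫ x, ‖x - xhat‖ ∂Q := by
  set c := (2 * π * σ ^ 2) ^ (-(d : ℝ) / 2)
  have hσ0 : 0 < σ := one_pos.trans_le hσ
  have hc : c ≤ (√(2 * π))⁻¹ := gaussian_normalizer_le_inv_sqrt_two_pi hd hσ
  have hLip : LipschitzWith (c * exp (-1 / 2) / σ).toNNReal φ := by
    rw [funext hφ]; exact lipschitzWith_gaussian μ (by positivity) hσ0
  have hexp : exp (-1 / 2) ≤ exp (-1 / (2 * σ ^ 2)) := by
    have : 1 / (2 * σ ^ 2) ≤ 1 / 2 := one_div_le_one_div_of_le two_pos (by nlinarith)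
    rw [exp_le_exp, neg_div, neg_div]
    linarith
  have hconst : c * exp (-1 / 2) / σ ≤ d / (√(2 * π) * σ) * exp (-1 / (2 * σ ^ 2)) :=
    calc c * exp (-1 / 2) / σ ≤ (√(2 * π))⁻¹ * exp (-1 / (2 * σ ^ 2)) / σ := by gcongr
      _ = 1 / (√(2 * π) * σ) * exp (-1 / (2 * σ ^ 2)) := by field_simp
      _ ≤ d / (√(2 * π) * σ) * exp (-1 / (2 * σ ^ 2)) := by gcongr; exact_mod_cast hd
  calc |(∫ x, φ x ∂Q) - φ xhat| ≤ (c * exp (-1 / 2) / σ).toNNReal * ∫ x, ‖x - xhat‖ ∂Q := by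
        simpa only [dist_eq_norm] using
          hLip.abs_integral_sub_le Q xhat (by simpa only [dist_eq_norm])
    _ ≤ _ := by
        rw [Real.coe_toNNReal _ (by positivity)]
        gcongr
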